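/- Let F_3 = ⟨a,b,c⟩ and w = c²a²b²a²b²c². Then the elements wa⁻¹, awb, w form a basis of the subgroup H = ⟨a, b, w⟩, and in particular K = ⟨wa⁻¹, awb⟩ is a free factor of H of rank 2. -/

import Mathlib

/-- `s` is a free basis of the group `G`: the induced map from the free group is bijective. -/
def IsFreeBasis {G : Type} [Group G] {ι : Type} (s : ι → G) : Prop :=
  Function.Bijective (FreeGroup.lift s)

/-- `s` is a free basis of the subgroup `H` of `G`. -/
def IsBasisOf {G : Type} [Group G] {ι : Type} (s : ι → G) (H : Subgroup G) : Prop :=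
  Function.Injective (FreeGroup.lift s) ∧ Subgroup.closure (Set.range s) = H

/-- `A` is a free factor of `G`: `G` is the internal free product of `A` with some subgroup `B`. -/
def IsFreeFactor {G : Type} [Group G] (A : Subgroup G) : Prop :=
  ∃ B : Subgroup G, Function.Bijective (Monoid.Coprod.lift A.subtype B.subtype)

/-- `A` is a free factor of the subgroup `H` of `G`. -/
def IsFreeFactorIn {G : Type} [Group G] (A H : Subgroup G) : Prop :=
  A ≤ H ∧ IsFreeFactor (A.subgroupOf H)

/-- The subgroup `H` is a free group of rank `r`. -/
def HasRank {G : Type} [Group G] (H : Subgroup G) (r : ℕ) : Prop :=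
  Nonempty (FreeGroup (Fin r) ≃* H)

/-- The subgroup generated by the first `i` elements of the family `b`. -/
def prefixSubgroup {G : Type} [Group G] {n : ℕ} (b : Fin n → G) (i : ℕ) : Subgroup G :=
  Subgroup.closure (b '' {j | (j : ℕ) < i})

/-- `b` is an echelon basis for the subgroup `H`: it is a basis of the ambient group and
the ranks of the intersections with the prefix subgroups grow by at most one at each step. -/
def IsEchelonBasis {G : Type} [Group G] {n : ℕ} (b : Fin n → G) (H : Subgroup G) : Prop :=
  IsFreeBasis b ∧ ∀ i : Fin n, ∃ r r' : ℕ,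
    HasRank (H ⊓ prefixSubgroup b (i : ℕ)) r' ∧
    HasRank (H ⊓ prefixSubgroup b ((i : ℕ) + 1)) r ∧ r ≤ r' + 1

/-- `H` is an echelon subgroup: the ambient group admits an ordered basis which is an
echelon basis for `H`. -/
def IsEchelon {G : Type} [Group G] (H : Subgroup G) : Prop :=
  ∃ (m : ℕ) (b : Fin m → G), IsEchelonBasis b H

/-- `B` is the free factor support of `H`: the minimal (by inclusion) free factor containing `H`. -/
def IsFFSupport {G : Type} [Group G] (H B : Subgroup G) : Prop :=
  IsFreeFactor B ∧ H ≤ B ∧ ∀ B' : Subgroup G, IsFreeFactor B' → H ≤ B' → B ≤ B'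

noncomputable def a : FreeGroup (Fin 3) := FreeGroup.of 0

noncomputable def b : FreeGroup (Fin 3) := FreeGroup.of 1

noncomputable def c : FreeGroup (Fin 3) := FreeGroup.of 2

noncomputable def w : FreeGroup (Fin 3) := c ^ 2 * a ^ 2 * b ^ 2 * a ^ 2 * b ^ 2 * c ^ 2

noncomputable def H : Subgroup (FreeGroup (Fin 3)) := Subgroup.closure {a, b, w}

noncomputable def K : Subgroup (FreeGroup (Fin 3)) := Subgroup.closure {w * a⁻¹, a * w * b}

/-!
The words `a`, `b`, `w` play ping-pong on the reduced words of `F₃`: each of them begins and ends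
with the same positive letter (`w` with `c`), so left multiplication by it or its inverse never
cancels against a word not starting with the opposite letter. Hence `(a, b, w)` is a basis of `H`,
and `(w a⁻¹, a w b, w)` is obtained from it by an invertible Nielsen move. A sub-family of a basis
spans a free factor, with the rest of the basis spanning a complement.
-/

open Function Monoid Subgroup
open scoped Monoid.Coprod

universe u

namespace FreeGroup

variable {α β : Type u}

def sumMulEquivCoprod : FreeGroup (α ⊕ β) ≃* FreeGroup α ∗ FreeGroup β :=
  MonoidHom.toMulEquiv (lift (Sum.elim (Coprod.inl ∘ of) (Coprod.inr ∘ of)))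
    (Coprod.lift (map Sum.inl) (map Sum.inr)) (by ext (i | i) <;> rfl) (by ext i <;> rfl)

theorem lift_map {γ G : Type*} [Group G] (f : α → γ) (s : γ → G) (x : FreeGroup α) :
    lift s (map f x) = lift (s ∘ f) x := by
  induction x using FreeGroup.induction_on <;> simp_all

variable [DecidableEq α]

theorem toWord_mul_of_isReduced_append {x y : FreeGroup α}
    (h : IsReduced (x.toWord ++ y.toWord)) : (x * y).toWord = x.toWord ++ y.toWord := by
  rw [toWord_mul, h.reduce_eq]

theorem head?_toWord_mul {x y : FreeGroup α} {l : α × Bool} (hx : x.toWord.getLast? = some l)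
    (hy : y.toWord.head? ≠ some (l.1, !l.2)) : (x * y).toWord.head? = x.toWord.head? := by
  have hred : IsReduced (x.toWord ++ y.toWord) := by
    refine List.isChain_append.2 ⟨isReduced_toWord, isReduced_toWord, ?_⟩
    rintro l' hl' m hm hlm
    rw [hx, Option.mem_some_iff] at hl'
    subst hl'
    by_contra hne
    apply hy
    rw [Option.mem_def.1 hm]
    cases l; cases m; simp_all
  rw [toWord_mul_of_isReduced_append hred, List.head?_append_of_ne_nil]
  rintro h
  simp [h] at hx

theorem head?_toWord_inv (x : FreeGroup α) :
    x⁻¹.toWord.head? = x.toWord.getLast?.map fun l => (l.1, !l.2) := by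
  simp [toWord_inv, invRev, List.head?_reverse, List.getLast?_map]

theorem getLast?_toWord_inv (x : FreeGroup α) :
    x⁻¹.toWord.getLast? = x.toWord.head?.map fun l => (l.1, !l.2) := by
  simp [toWord_inv, invRev, List.getLast?_reverse, List.head?_map]

theorem injective_lift_of_toWord_head?_getLast? {ι : Type u} [Nontrivial ι] {s : ι → FreeGroup α}
    {p : ι → α} (hp : Injective p) (hhead : ∀ i, (s i).toWord.head? = some (p i, true))
    (hlast : ∀ i, (s i).toWord.getLast? = some (p i, true)) : Injective (lift s) := by
  let X : Bool → ι → Set (FreeGroup α) := fun e i => {g | g.toWord.head? = some (p i, e)}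
  have hdisj : ∀ e e' i j, (e, i) ≠ (e', j) → Disjoint (X e i) (X e' j) := by
    refine fun e e' i j hne => Set.disjoint_left.2 fun g hi hj => hne ?_
    obtain ⟨hij, rfl⟩ := Prod.mk.inj (Option.some.inj (hi.symm.trans hj))
    rw [hp hij]
  refine injective_lift_of_ping_pong s (X true) (X false) (fun i => ⟨s i, hhead i⟩)
    (fun i j hij => hdisj _ _ _ _ (by simpa using hij))
    (fun i j hij => hdisj _ _ _ _ (by simpa using hij))
    (fun i j => hdisj _ _ _ _ (by simp)) (fun i => ?_) (fun i => ?_)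
  · rintro _ ⟨g, hg, rfl⟩
    exact (head?_toWord_mul (hlast i) hg).trans (hhead i)
  · rintro _ ⟨g, hg, rfl⟩
    have hlast' : (s i)⁻¹.toWord.getLast? = some (p i, false) := by
      rw [getLast?_toWord_inv, hhead]; rfl
    refine (head?_toWord_mul hlast' hg).trans ?_
    rw [head?_toWord_inv, hlast]; rfl

end FreeGroup

theorem isFreeFactor_range_comp_inl {M N G : Type} [Group M] [Group N] [Group G]
    {f : M ∗ N →* G} (hf : Bijective f) : IsFreeFactor (f.comp Coprod.inl).range := by
  refine ⟨(f.comp Coprod.inr).range, ?_⟩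
  let e := MulEquiv.coprodCongr
    (MonoidHom.ofInjective (f := f.comp Coprod.inl) (hf.1.comp Coprod.inl_injective))
    (MonoidHom.ofInjective (f := f.comp Coprod.inr) (hf.1.comp Coprod.inr_injective))
  have he : (Coprod.lift (f.comp Coprod.inl).range.subtype (f.comp Coprod.inr).range.subtype).comp
      e.toMonoidHom = f := by
    ext <;> simp [e, MulEquiv.coprodCongr, MonoidHom.ofInjective_apply]
  rw [← he, MonoidHom.coe_comp] at hf
  exact (Bijective.of_comp_iff _ e.bijective).1 hf

namespace IsBasisOf

variable {G ι κ : Type} [Group G] {s : ι → G} {H : Subgroup G}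

noncomputable def mulEquiv (h : IsBasisOf s H) : FreeGroup ι ≃* H :=
  (MonoidHom.ofInjective h.1).trans
    (MulEquiv.subgroupCongr ((FreeGroup.range_lift_eq_closure).trans h.2))

theorem coe_mulEquiv_apply (h : IsBasisOf s H) (x : FreeGroup ι) :
    (h.mulEquiv x : G) = FreeGroup.lift s x := rfl

theorem of_mulEquiv {t : κ → G} (h : IsBasisOf s H) (φ : FreeGroup κ ≃* FreeGroup ι)
    (ht : ∀ k, FreeGroup.lift s (φ (FreeGroup.of k)) = t k) : IsBasisOf t H := by
  have hφ : (FreeGroup.lift s).comp φ.toMonoidHom = FreeGroup.lift t :=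
    FreeGroup.ext_hom _ _ (by simpa using ht)
  refine ⟨hφ ▸ h.1.comp φ.injective, ?_⟩
  rw [← h.2, ← FreeGroup.range_lift_eq_closure, ← FreeGroup.range_lift_eq_closure, ← hφ]
  exact SetLike.coe_injective (φ.surjective.range_comp _)

theorem comp_of_injective {f : κ → ι} (h : IsBasisOf s H) (hf : Injective f) :
    IsBasisOf (s ∘ f) (closure (Set.range (s ∘ f))) := by
  refine ⟨fun x y hxy => FreeGroup.map_injective hf (h.1 ?_), rfl⟩
  simpa [FreeGroup.lift_map] using hxy

theorem isFreeFactorIn_closure_range_inl {α β : Type} {s : α ⊕ β → G} (h : IsBasisOf s H) :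
    IsFreeFactorIn (closure (Set.range (s ∘ Sum.inl))) H := by
  let f : Coprod (FreeGroup α) (FreeGroup β) →* H :=
    h.mulEquiv.toMonoidHom.comp FreeGroup.sumMulEquivCoprod.symm.toMonoidHom
  have hf : Bijective f := h.mulEquiv.bijective.comp FreeGroup.sumMulEquivCoprod.symm.bijective
  have hrange : (f.comp Coprod.inl).range = (closure (Set.range (s ∘ Sum.inl))).subgroupOf H := by
    ext x
    rw [mem_subgroupOf, ← FreeGroup.range_lift_eq_closure]
    simp [f, Subtype.ext_iff, coe_mulEquiv_apply, FreeGroup.sumMulEquivCoprod, FreeGroup.lift_map]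
  refine ⟨h.2 ▸ closure_mono (Set.range_comp_subset_range _ _), ?_⟩
  exact hrange ▸ isFreeFactor_range_comp_inl hf

end IsBasisOf

open FreeGroup

theorem injective_lift_a_b_w : Injective (lift ![a, b, w]) :=
  injective_lift_of_toWord_head?_getLast? (p := id) injective_id (by decide) (by decide)

theorem isBasisOf_a_b_w : IsBasisOf ![a, b, w] H := by
  refine ⟨injective_lift_a_b_w, ?_⟩
  rw [H, Matrix.range_cons, Matrix.range_cons_cons_empty, Set.singleton_union]

noncomputable def nielsenMove : FreeGroup (Fin 3) ≃* FreeGroup (Fin 3) :=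
  MonoidHom.toMulEquiv (lift ![of 2 * (of 0)⁻¹, of 0 * of 2 * of 1, of 2])
    (lift ![(of 0)⁻¹ * of 2, (of 2)⁻¹ * (of 2)⁻¹ * of 0 * of 1, of 2])
    (by ext i; fin_cases i <;> simp [mul_assoc]) (by ext i; fin_cases i <;> simp [mul_assoc])

theorem isBasisOf_H : IsBasisOf ![w * a⁻¹, a * w * b, w] H :=
  isBasisOf_a_b_w.of_mulEquiv nielsenMove (by intro i; fin_cases i <;> simp [nielsenMove])

theorem statement17 :
    IsBasisOf ![w * a⁻¹, a * w * b, w] H ∧ IsFreeFactorIn K H ∧ HasRank K 2 := by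
  have hsum : IsBasisOf (Sum.elim ![w * a⁻¹, a * w * b] ![w]) H :=
    isBasisOf_H.of_mulEquiv (FreeGroup.freeGroupCongr finSumFinEquiv)
      (by rintro (i | i) <;> fin_cases i <;> rfl)
  have hK : closure (Set.range ![w * a⁻¹, a * w * b]) = K := by
    rw [K, Matrix.range_cons_cons_empty]
  refine ⟨isBasisOf_H, hK ▸ hsum.isFreeFactorIn_closure_range_inl, ?_⟩
  exact ⟨(hK ▸ hsum.comp_of_injective Sum.inl_injective).mulEquiv⟩
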